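/- For every integer r ≥ 1 and every real number x > r, Σ_{i=0}^{r−1} (−1)^i · binomial(r−1, i) · (x + r − 2 − 2i) / ( (x + r − 2 − i)_{(r)} ) = δ_{r,1}, where δ_{r,1} = 1 if r = 1 and 0 otherwise. (All denominators appearing are positive under these hypotheses.) -/

import Mathlib

/-- The falling factorial `(x)_{(r)} = x(x−1)⋯(x−r+1)`. -/
def fallingFactorial (x : ℝ) (r : ℕ) : ℝ := ∏ j ∈ Finset.range r, (x - j)

lemma ff_pos (y : ℝ) (n : ℕ) (h : (n:ℝ) - 1 < y) : 0 < fallingFactorial y n := by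
  refine Finset.prod_pos fun j hj => ?_
  have hj1 : (j:ℝ) + 1 ≤ (n:ℝ) := by exact_mod_cast Finset.mem_range.mp hj
  linarith

lemma ff_succ (y : ℝ) (n : ℕ) : fallingFactorial y (n+1) = fallingFactorial y n * (y - n) :=
  Finset.prod_range_succ _ _

lemma ff_succ' (y : ℝ) (n : ℕ) : fallingFactorial y (n+1) = y * fallingFactorial (y-1) n := by
  unfold fallingFactorial
  rw [Finset.prod_range_succ', Nat.cast_zero, sub_zero, mul_comm]
  congr 1
  exact Finset.prod_congr rfl fun j _ => by push_cast; ring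

lemma aux_sum (m : ℕ) (x : ℝ) (hx : ((m:ℝ) + 2) < x) :
    ∑ i ∈ Finset.range (m+2),
      (-1 : ℝ) ^ i * (Nat.choose (m+1) i : ℝ) * (x + m - 2 * i) /
        fallingFactorial (x + m - i) (m+2) = 0 := by
  set g : ℕ → ℝ := fun i => if i = 0 then 0 else
    (-1:ℝ)^i * (Nat.choose m (i-1) : ℝ) / fallingFactorial (x + m - i) (m+1) with hg
  have key : ∀ i ∈ Finset.range (m+2),
      (-1 : ℝ) ^ i * (Nat.choose (m+1) i : ℝ) * (x + m - 2 * i) /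
        fallingFactorial (x + m - i) (m+2) = g i - g (i+1) := by
    intro i hi
    have him : i < m + 2 := Finset.mem_range.mp hi
    match i with
    | 0 =>
      simp only [hg]
      norm_num
      have hA : (0:ℝ) < fallingFactorial (x + m - 1) (m+1) := by
        apply ff_pos; push_cast; linarith
      have hx0 : x + (m:ℝ) ≠ 0 := by linarith
      have hP : fallingFactorial (x + m) (m+2) = (x + m) * fallingFactorial (x + m - 1) (m+1) :=
        ff_succ' _ _
      rw [hP]
      field_simp
    | (k+1) =>
      have hk : k ≤ m := by omega
      have hk' : (k:ℝ) ≤ m := by exact_mod_cast hk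
      simp only [hg]
      norm_num
      set A : ℝ := fallingFactorial (x + m - (k+1)) (m+1) with hA'
      set B : ℝ := fallingFactorial (x + m - (k+2)) (m+1) with hB'
      have hA : (0:ℝ) < A := by rw [hA']; apply ff_pos; push_cast; linarith
      have hB : (0:ℝ) < B := by rw [hB']; apply ff_pos; push_cast; linarith
      have hP1 : fallingFactorial (x + m - (k+1)) (m+2) = A * (x - k - 2) := by
        rw [ff_succ, hA']; congr 1; push_cast; ring
      have hP2 : fallingFactorial (x + m - (k+1)) (m+2) = (x + m - (k+1)) * B := by
        rw [ff_succ', hB']; congr 2; ring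
      have pascal : (Nat.choose (m+1) (k+1) : ℝ) = Nat.choose m k + Nat.choose m (k+1) := by
        rw [Nat.choose_succ_succ]; push_cast; ring
      have hcr : ((k:ℝ)+1) * (Nat.choose m (k+1) : ℝ) = ((m:ℝ) - k) * (Nat.choose m k : ℝ) := by
        have h2 := Nat.cast_inj (R := ℝ) |>.mpr (Nat.choose_succ_right_eq m k)
        push_cast [Nat.cast_sub hk] at h2
        linarith
      have num : (Nat.choose (m+1) (k+1) : ℝ) * (x + m - 2*k - 2) =
          (Nat.choose m k : ℝ) * (x - k - 2) + (Nat.choose m (k+1) : ℝ) * (x + m - k - 1) := by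
        linear_combination (x + m - 2*k - 2) * pascal - hcr
      have hBeq : A * (x - k - 2) = (x + m - (k+1)) * B := by rw [← hP1, hP2]
      have hBden : fallingFactorial (x + (m:ℝ) - ((k:ℝ)+1+1)) (m+1) = B := by
        rw [show x + (m:ℝ) - ((k:ℝ)+1+1) = x + (m:ℝ) - ((k:ℝ)+2) from by ring]
      rw [hP1, hBden, div_sub_div _ _ (ne_of_gt hA) (ne_of_gt hB),
        div_eq_div_iff (by nlinarith) (by positivity)]
      linear_combination ((-1:ℝ)^(k+1) * A * B) * num -
        ((-1:ℝ)^(k+1) * A * (Nat.choose m (k+1) : ℝ)) * hBeq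
  rw [Finset.sum_congr rfl key, Finset.sum_range_sub' g (m+2)]
  have g0 : g 0 = 0 := by simp [hg]
  have gend : g (m+2) = 0 := by
    simp only [hg]
    norm_num [Nat.choose_eq_zero_of_lt]
  rw [g0, gend, sub_zero]

/-- For every integer `r ≥ 1` and real `x > r`,
`Σ_{i=0}^{r−1} (−1)^i · C(r−1, i) · (x+r−2−2i)/((x+r−2−i)_{(r)}) = δ_{r,1}`. -/
theorem alternating_sum_identity (r : ℕ) (hr : 1 ≤ r) (x : ℝ) (hx : (r : ℝ) < x) :
    ∑ i ∈ Finset.range r,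
      (-1 : ℝ) ^ i * (Nat.choose (r - 1) i : ℝ) * (x + r - 2 - 2 * i) /
        fallingFactorial (x + r - 2 - i) r =
      if r = 1 then 1 else 0 := by
  obtain _ | _ | m := r
  · exact absurd hr (by norm_num)
  · have hx1 : (1:ℝ) < x := by push_cast at hx; linarith
    simp only [Finset.sum_range_one, fallingFactorial]
    norm_num
    intro h; linarith
  · have hx' : (m:ℝ) + 2 < x := by push_cast at hx; linarith
    rw [if_neg (by omega)]
    rw [← aux_sum m x hx']
    refine Finset.sum_congr rfl fun i _ => ?_
    congr 1
    · congr 1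
      push_cast
      ring
    · congr 1
      push_cast
      ring
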